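/- Any two involutions in PSL₂(𝔽_q), for q ≥ 5 a prime power, are conjugate in PSL₂(𝔽_q) when q is even, and are conjugate in PGL₂(𝔽_q) in general; in particular there is a single PSL₂(𝔽_q)-conjugacy class of involutions. -/

import Mathlib

/-!
An involution of `PSL(2, F)` lifts to `g ∈ SL(2, F)` with `g²` scalar but `g` not scalar. By
Cayley–Hamilton, `g² = (tr g) g - 1`, so `tr g = 0` and `g² = -1`. For any vector `v` with
`v, gv` independent, the matrix `P = [v | gv]` satisfies `P S = g P`, where
`S = !![0, -1; 1, 0]`. Right multiplication by `x + yS`, which commutes with `S` and has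
determinant `x² + y²`, rescales `det P` to `1`, because every element of a finite field is a
sum of two squares. Hence all such `g` are conjugate in `SL(2, F)` to `S`.
-/

open Matrix
open scoped MatrixGroups

theorem FiniteField.exists_sq_add_sq {F : Type*} [Field F] [Fintype F] (x : F) :
    ∃ a b : F, a ^ 2 + b ^ 2 = x := by
  rcases Nat.even_or_odd (Fintype.card F) with hev | hodd
  · obtain ⟨a, ha⟩ := isSquare_of_char_two (even_card_iff_char_two.2 (Nat.even_iff.1 hev)) x
    exact ⟨a, 0, by rw [ha]; ring⟩
  · obtain ⟨a, b, hab⟩ := exists_root_sum_quadratic (f := Polynomial.X ^ 2)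
      (g := Polynomial.X ^ 2 - Polynomial.C x) (Polynomial.degree_X_pow 2)
      (Polynomial.degree_X_pow_sub_C two_pos x) (Nat.odd_iff.1 hodd)
    refine ⟨a, b, ?_⟩
    simp only [Polynomial.eval_pow, Polynomial.eval_X, Polynomial.eval_sub,
      Polynomial.eval_C] at hab
    linear_combination hab

namespace Matrix

variable {R : Type*} [CommRing R]

theorem sq_eq_trace_smul_sub_det_smul_one_fin_two (M : Matrix (Fin 2) (Fin 2) R) :
    M ^ 2 = M.trace • M - M.det • (1 : Matrix (Fin 2) (Fin 2) R) := by
  rw [eta_fin_two M, sq, mul_fin_two, trace_fin_two_of, det_fin_two_of, one_fin_two]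
  ext i j
  fin_cases i <;> fin_cases j <;> simp <;> ring

theorem mem_range_scalar_fin_two_iff (M : Matrix (Fin 2) (Fin 2) R) :
    M ∈ Set.range (scalar (Fin 2)) ↔ M 0 1 = 0 ∧ M 1 0 = 0 ∧ M 0 0 = M 1 1 := by
  constructor
  · rintro ⟨r, rfl⟩
    simp
  · rintro ⟨h01, h10, h00⟩
    refine ⟨M 0 0, ?_⟩
    rw [eta_fin_two M, h01, h10, ← h00]
    ext i j
    fin_cases i <;> fin_cases j <;> simp

def cyclicFinTwo (g : Matrix (Fin 2) (Fin 2) R) (v : Fin 2 → R) : Matrix (Fin 2) (Fin 2) R :=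
  (of ![v, g *ᵥ v])ᵀ

theorem cyclicFinTwo_mul_eq {g : Matrix (Fin 2) (Fin 2) R} (hg : g * g = -1) (v : Fin 2 → R) :
    cyclicFinTwo g v * !![0, -1; 1, 0] = g * cyclicFinTwo g v := by
  have hggv : g *ᵥ (g *ᵥ v) = -v := by rw [mulVec_mulVec, hg, neg_mulVec, one_mulVec]
  ext i j
  fin_cases j
  · fin_cases i <;> simp [cyclicFinTwo, mul_apply, Fin.sum_univ_two]
  · simpa [cyclicFinTwo, mul_apply, Fin.sum_univ_two, mulVec, dotProduct] using
      (congrFun hggv i).symm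

theorem exists_det_cyclicFinTwo_ne_zero {g : Matrix (Fin 2) (Fin 2) R}
    (hg : g ∉ Set.range (scalar (Fin 2))) : ∃ v, (cyclicFinTwo g v).det ≠ 0 := by
  by_contra! h
  have h0 := h ![1, 0]
  have h1 := h ![0, 1]
  have h2 := h ![1, 1]
  simp only [cyclicFinTwo, det_transpose, det_fin_two, of_apply, mulVec_fin_two, cons_val_zero,
    cons_val_one, cons_val_fin_one, mul_one, mul_zero, one_mul, zero_mul, add_zero, zero_add,
    sub_zero, zero_sub, neg_eq_zero] at h0 h1 h2
  exact hg ((mem_range_scalar_fin_two_iff g).2 ⟨h1, h0, by linear_combination -h2 + h0 - h1⟩)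

namespace SpecialLinearGroup

def S : SL(2, R) := ⟨!![0, -1; 1, 0], by simp [det_fin_two_of]⟩

theorem isConj_of_coe_mul_eq {n : Type*} [Fintype n] [DecidableEq n]
    {g h : SpecialLinearGroup n R} (P : SpecialLinearGroup n R)
    (hP : (P : Matrix n n R) * g = h * P) : IsConj g h :=
  ⟨toUnits P, Subtype.ext hP⟩

theorem mem_center_iff_coe_mem_range_scalar {n : Type*} [Fintype n] [DecidableEq n]
    {A : SpecialLinearGroup n R} :
    A ∈ Subgroup.center (SpecialLinearGroup n R) ↔
      (A : Matrix n n R) ∈ Set.range (scalar n) := by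
  rw [mem_center_iff]
  refine ⟨fun ⟨r, _, hr⟩ ↦ ⟨r, hr⟩, fun ⟨r, hr⟩ ↦ ⟨r, ?_, hr⟩⟩
  simpa [← hr] using A.prop

theorem center_eq_bot_of_two_eq_zero [NoZeroDivisors R] (h2 : (2 : R) = 0) :
    Subgroup.center SL(2, R) = ⊥ := by
  refine eq_bot_iff.2 fun A hA ↦ ?_
  obtain ⟨r, hr2, hrA⟩ := mem_center_iff.1 hA
  have hr : r = 1 := by
    rw [Fintype.card_fin] at hr2
    have hsq : (r - 1) ^ 2 = 0 := by linear_combination hr2 - (r - 1) * h2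
    linear_combination pow_eq_zero_iff two_ne_zero |>.1 hsq
  rw [Subgroup.mem_bot]
  ext : 1
  simp [← hrA, hr]

variable {F : Type*} [Field F]

theorem trace_eq_zero_of_sq_mem_center {g : SL(2, F)}
    (hsq : g ^ 2 ∈ Subgroup.center SL(2, F)) (hg : g ∉ Subgroup.center SL(2, F)) :
    (g : Matrix (Fin 2) (Fin 2) F).trace = 0 := by
  rw [mem_center_iff_coe_mem_range_scalar] at hsq hg
  obtain ⟨r, hr⟩ := hsq
  rw [coe_pow, sq_eq_trace_smul_sub_det_smul_one_fin_two, g.prop] at hr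
  by_contra ht
  have h01 := congrFun₂ hr 0 1
  have h10 := congrFun₂ hr 1 0
  have h00 := congrFun₂ hr 0 0
  have h11 := congrFun₂ hr 1 1
  simp only [scalar_apply, sub_apply, smul_apply, smul_eq_mul, one_smul, diagonal_apply_ne,
    diagonal_apply_eq, one_apply_ne, one_apply_eq, ne_eq, zero_ne_one, one_ne_zero,
    not_false_eq_true, sub_zero, zero_eq_mul] at h01 h10 h00 h11
  refine hg ((mem_range_scalar_fin_two_iff _).2
    ⟨h01.resolve_left ht, h10.resolve_left ht, mul_left_cancel₀ ht ?_⟩)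
  linear_combination h11 - h00

theorem isConj_S_of_trace_eq_zero [Fintype F] {g : SL(2, F)}
    (ht : (g : Matrix (Fin 2) (Fin 2) F).trace = 0) (hg : g ∉ Subgroup.center SL(2, F)) :
    IsConj S g := by
  have hgg : (g : Matrix (Fin 2) (Fin 2) F) * g = -1 := by
    rw [← sq, sq_eq_trace_smul_sub_det_smul_one_fin_two, ht, g.prop]
    simp
  obtain ⟨v, hv⟩ :=
    exists_det_cyclicFinTwo_ne_zero (mem_center_iff_coe_mem_range_scalar.not.1 hg)
  set P := cyclicFinTwo (g : Matrix (Fin 2) (Fin 2) F) v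
  obtain ⟨x, y, hxy⟩ := FiniteField.exists_sq_add_sq P.det⁻¹
  have hcomm : !![x, -y; y, x] * !![0, -1; 1, 0] = !![0, -1; 1, 0] * !![x, -y; y, x] := by
    simp
  refine isConj_of_coe_mul_eq ⟨P * !![x, -y; y, x], ?_⟩ ?_
  · rw [det_mul, det_fin_two_of]
    linear_combination P.det * hxy + mul_inv_cancel₀ hv
  · change P * !![x, -y; y, x] * !![0, -1; 1, 0] =
      (g : Matrix (Fin 2) (Fin 2) F) * (P * !![x, -y; y, x])
    rw [mul_assoc, hcomm, ← mul_assoc, cyclicFinTwo_mul_eq hgg, mul_assoc]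

theorem isConj_of_sq_mem_center [Fintype F] {g h : SL(2, F)}
    (hg2 : g ^ 2 ∈ Subgroup.center SL(2, F)) (hg : g ∉ Subgroup.center SL(2, F))
    (hh2 : h ^ 2 ∈ Subgroup.center SL(2, F)) (hh : h ∉ Subgroup.center SL(2, F)) :
    IsConj g h :=
  (isConj_S_of_trace_eq_zero (trace_eq_zero_of_sq_mem_center hg2 hg) hg).symm.trans
    (isConj_S_of_trace_eq_zero (trace_eq_zero_of_sq_mem_center hh2 hh) hh)

end SpecialLinearGroup

end Matrix

theorem QuotientGroup.sq_mem_and_not_mem_of_orderOf_mk_eq_two {G : Type*} [Group G]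
    {N : Subgroup G} [N.Normal] {g : G} (hg : orderOf (g : G ⧸ N) = 2) :
    g ^ 2 ∈ N ∧ g ∉ N := by
  obtain ⟨hsq, hne⟩ := orderOf_eq_prime_iff.1 hg
  rw [← QuotientGroup.mk_pow, QuotientGroup.eq_one_iff] at hsq
  exact ⟨hsq, fun hmem ↦ hne ((QuotientGroup.eq_one_iff g).2 hmem)⟩

theorem stmt13_general (q : ℕ)
    (F : Type) [Field F] [Fintype F] (hcard : Fintype.card F = q) :
    let ψ : SL(2, F) →* (GL (Fin 2) F ⧸ Subgroup.center (GL (Fin 2) F)) :=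
      (QuotientGroup.mk' _).comp (Matrix.SpecialLinearGroup.toGL)
    (q % 2 = 0 → ∀ g h : SL(2, F), orderOf g = 2 → orderOf h = 2 → IsConj g h) ∧
    (∀ g h : SL(2, F), orderOf ((g : PSL(2, F))) = 2 → orderOf ((h : PSL(2, F))) = 2 →
      IsConj (ψ g) (ψ h)) ∧
    (∀ g h : PSL(2, F), orderOf g = 2 → orderOf h = 2 → IsConj g h) := by
  intro ψ
  refine ⟨fun hq g h hg hh ↦ ?_, fun g h hg hh ↦ ?_, fun g h hg hh ↦ ?_⟩
  · have h2 : (2 : F) = 0 := by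
      simpa [FiniteField.even_card_iff_char_two.2 (hcard ▸ hq)] using
        ringChar.Nat.cast_ringChar (R := F)
    have hinv {k : SL(2, F)} (hk : orderOf k = 2) :
        k ^ 2 ∈ Subgroup.center SL(2, F) ∧ k ∉ Subgroup.center SL(2, F) := by
      obtain ⟨hsq, hne⟩ := orderOf_eq_prime_iff.1 hk
      rw [Matrix.SpecialLinearGroup.center_eq_bot_of_two_eq_zero h2, hsq, Subgroup.mem_bot]
      exact ⟨rfl, hne⟩
    exact Matrix.SpecialLinearGroup.isConj_of_sq_mem_center
      (hinv hg).1 (hinv hg).2 (hinv hh).1 (hinv hh).2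
  · obtain ⟨hg2, hg1⟩ := QuotientGroup.sq_mem_and_not_mem_of_orderOf_mk_eq_two hg
    obtain ⟨hh2, hh1⟩ := QuotientGroup.sq_mem_and_not_mem_of_orderOf_mk_eq_two hh
    exact ψ.map_isConj (Matrix.SpecialLinearGroup.isConj_of_sq_mem_center hg2 hg1 hh2 hh1)
  · obtain ⟨g, rfl⟩ := QuotientGroup.mk_surjective g
    obtain ⟨h, rfl⟩ := QuotientGroup.mk_surjective h
    obtain ⟨hg2, hg1⟩ := QuotientGroup.sq_mem_and_not_mem_of_orderOf_mk_eq_two hg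
    obtain ⟨hh2, hh1⟩ := QuotientGroup.sq_mem_and_not_mem_of_orderOf_mk_eq_two hh
    exact (QuotientGroup.mk' _).map_isConj
      (Matrix.SpecialLinearGroup.isConj_of_sq_mem_center hg2 hg1 hh2 hh1)

theorem stmt13 (p f q : ℕ) (hp : p.Prime) (hf : 1 ≤ f) (hq : q = p ^ f)
    (hq5 : 5 ≤ q) (F : Type) [Field F] [Fintype F] (hcard : Fintype.card F = q) :
    let ψ : SL(2, F) →* (GL (Fin 2) F ⧸ Subgroup.center (GL (Fin 2) F)) :=
      (QuotientGroup.mk' _).comp (Matrix.SpecialLinearGroup.toGL)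
    (q % 2 = 0 → ∀ g h : SL(2, F), orderOf g = 2 → orderOf h = 2 → IsConj g h) ∧
    (∀ g h : SL(2, F), orderOf ((g : PSL(2, F))) = 2 → orderOf ((h : PSL(2, F))) = 2 →
      IsConj (ψ g) (ψ h)) ∧
    (∀ g h : PSL(2, F), orderOf g = 2 → orderOf h = 2 → IsConj g h) :=
  stmt13_general q F hcard
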